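/- arXiv:2004.04777 — 9 statements merged into one kernel-verified Lean document; each statement's English description precedes it below -/
import Mathlib

section
/- Let p be a monic polynomial of degree d over ℂ of the form p(Z) = Z^d − a·Z^{d−1} + (lower order terms). For any z ∈ ℂ^d with pairwise distinct entries, the sum of the entries of W_p(z) equals a, where W_p is the Weierstrass iteration. That is, the hyperplane {z : z₁ + ⋯ + z_d = a} contains the image of W_p. -/
open Polynomial Finset

/-
Summing the Weierstrass corrections gives `∑ₖ p(zₖ) / ∏_{j ≠ k} (zₖ - zⱼ)`, which is the
coefficient of `Z^(d-1)` in the Lagrange interpolant of `p` at the nodes `zₖ`. That interpolant is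
`p - ∏ₖ (Z - zₖ)`, whose `Z^(d-1)` coefficient is `-a + ∑ₖ zₖ`; hence `∑ₖ W(z)ₖ = a`.
-/

namespace Lagrange

variable {F ι : Type*} [Field F] {s : Finset ι} {v : ι → F}

theorem coeff_nodal_card_sub_one (hs : s.Nonempty) :
    (nodal s v).coeff (#s - 1) = -∑ i ∈ s, v i := by
  rw [nodal_eq, prod_X_sub_C_coeff_card_pred s v hs.card_pos]

theorem degree_sub_C_mul_nodal_lt {p : F[X]} (hp : p.degree ≤ #s) :
    (p - C (p.coeff #s) * nodal s v).degree < #s := by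
  rw [degree_lt_iff_coeff_zero]
  intro m hm
  rw [coeff_sub, coeff_C_mul]
  rcases hm.eq_or_lt with rfl | hlt
  · rw [← natDegree_nodal (v := v), nodal_monic.coeff_natDegree, mul_one, natDegree_nodal,
      sub_self]
  · rw [coeff_eq_zero_of_degree_lt (hp.trans_lt (by exact_mod_cast hlt)),
      coeff_eq_zero_of_degree_lt (degree_nodal.trans_lt (by exact_mod_cast hlt)), mul_zero,
      sub_zero]

/-- The divided difference of a polynomial of degree at most `#s` over the nodes `v i`. -/
theorem sum_eval_div_prod_sub_of_degree_le [DecidableEq ι] (hvs : Set.InjOn v s) (hs : s.Nonempty) {p : F[X]}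
    (hp : p.degree ≤ #s) :
    ∑ i ∈ s, p.eval (v i) / ∏ j ∈ s.erase i, (v i - v j) =
      p.coeff (#s - 1) + p.coeff #s * ∑ i ∈ s, v i := by
  have hvalues : ∀ i ∈ s, (p - C (p.coeff #s) * nodal s v).eval (v i) = p.eval (v i) := by
    intro i hi
    rw [eval_sub, eval_mul, eval_nodal_at_node hi, mul_zero, sub_zero]
  rw [← sum_congr rfl fun i hi => congrArg (· / _) (hvalues i hi),
    ← coeff_eq_sum hvs (degree_sub_C_mul_nodal_lt hp), coeff_sub, coeff_C_mul,
    coeff_nodal_card_sub_one hs]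
  ring

end Lagrange

/-- Invariant hyperplane for the Weierstrass method: if `p` is monic of degree `d`
with coefficient of `Z^(d-1)` equal to `-a`, and `z ∈ ℂ^d` has pairwise distinct
entries, then the entries of `W_p(z)` sum to `a`. -/
theorem weierstrass_invariant_hyperplane
    (d : ℕ) (hd : 0 < d) (p : Polynomial ℂ) (hmonic : p.Monic)
    (hdeg : p.natDegree = d) (a : ℂ) (hcoeff : p.coeff (d - 1) = -a)
    (W : (Fin d → ℂ) → Fin d → ℂ)
    (hW : ∀ (z : Fin d → ℂ) (k : Fin d),
      W z k = z k - p.eval (z k) / ∏ j ∈ univ.erase k, (z k - z j))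
    (z : Fin d → ℂ) (hz : Function.Injective z) :
    ∑ k, W z k = a := by
  have hcard : #(univ : Finset (Fin d)) = d := by rw [card_univ, Fintype.card_fin]
  have hsum := Lagrange.sum_eval_div_prod_sub_of_degree_le hz.injOn
    (univ_nonempty_iff.mpr ⟨⟨0, hd⟩⟩) (p := p) (by rw [hcard, ← hdeg]; exact degree_le_natDegree)
  have hlead : p.coeff d = 1 := hdeg ▸ hmonic.coeff_natDegree
  rw [hcard, hcoeff, hlead] at hsum
  simp only [hW, sum_sub_distrib, hsum]
  ring
end

section
/- If p is a monic polynomial of degree d, T(z) = αz + β with α ≠ 0 is an affine transformation, and Tp is the monic polynomial whose roots are the T-images of the roots of p, then W_{Tp} = T ∘ W_p ∘ T⁻¹, where T acts on ℂ^d component-wise. That is, the Weierstrass dynamics for p and Tp are affinely conjugate. -/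
open Polynomial Finset

/-!
An affine map `T z = a z + b` scales every difference `T u - T v` by `a`. Hence the numerator
`(Tp)(T z_k) = ∏_j (T z_k - T α_j)` of the Weierstrass correction picks up `a ^ d`, its
denominator `∏_{j ≠ k} (T z_k - T z_j)` picks up `a ^ (d - 1)`, and the correction itself is
multiplied by `a`, which is exactly the conjugacy `W_{Tp} ∘ T = T ∘ W_p`.
-/

theorem prod_affine_sub_affine {ι R : Type*} [CommRing R] (s : Finset ι) (a b x : R)
    (y : ι → R) :
    ∏ j ∈ s, (a * x + b - (a * y j + b)) = a ^ #s * ∏ j ∈ s, (x - y j) := by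
  rw [← prod_const, ← prod_mul_distrib]
  exact prod_congr rfl fun j _ => by ring

theorem pow_succ_mul_div_pow_mul {K : Type*} [Field K] (a x y : K) (n : ℕ) :
    a ^ (n + 1) * x / (a ^ n * y) = a * (x / y) := by
  rcases eq_or_ne a 0 with rfl | ha
  · simp
  · rw [pow_succ, mul_assoc, mul_div_mul_left _ _ (pow_ne_zero n ha), mul_div_assoc]

theorem weierstrass_correction_affine {ι K : Type*} [Fintype ι] [DecidableEq ι] [Field K]
    (α z : ι → K) (a b : K) (k : ι) :
    (∏ j, (X - C (a * α j + b))).eval (a * z k + b) /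
        ∏ j ∈ univ.erase k, (a * z k + b - (a * z j + b)) =
      a * ((∏ j, (X - C (α j))).eval (z k) / ∏ j ∈ univ.erase k, (z k - z j)) := by
  simp only [eval_prod, eval_sub, eval_X, eval_C, prod_affine_sub_affine]
  rw [← card_erase_add_one (mem_univ k), pow_succ_mul_div_pow_mul]

theorem weierstrass_affine_conjugation_general
    (d : ℕ) (α : Fin d → ℂ) (a b : ℂ)
    (p Tp : Polynomial ℂ)
    (hp : p = ∏ j : Fin d, (X - C (α j)))
    (hTp : Tp = ∏ j : Fin d, (X - C (a * α j + b)))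
    (W WT : (Fin d → ℂ) → Fin d → ℂ)
    (hW : ∀ (z : Fin d → ℂ) (k : Fin d),
      W z k = z k - p.eval (z k) / ∏ j ∈ univ.erase k, (z k - z j))
    (hWT : ∀ (z : Fin d → ℂ) (k : Fin d),
      WT z k = z k - Tp.eval (z k) / ∏ j ∈ univ.erase k, (z k - z j))
    (z : Fin d → ℂ) :
    ∀ k : Fin d, WT (fun i => a * z i + b) k = a * W z k + b := by
  intro k
  rw [hWT, hW, hTp, hp, weierstrass_correction_affine]
  ring

/-- The Weierstrass dynamics for `p` and `Tp` are affinely conjugate: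
if `p` is monic with roots `α_j`, `T(z) = a z + b` with `a ≠ 0`, and `Tp` is the
monic polynomial with roots `T(α_j)`, then `W_{Tp}(T·z) = T·(W_p z)` for every
`z ∈ ℂ^d` with pairwise distinct entries, `T` acting component-wise. -/
theorem weierstrass_affine_conjugation
    (d : ℕ) (α : Fin d → ℂ) (a b : ℂ) (ha : a ≠ 0)
    (p Tp : Polynomial ℂ)
    (hp : p = ∏ j : Fin d, (X - C (α j)))
    (hTp : Tp = ∏ j : Fin d, (X - C (a * α j + b)))
    (W WT : (Fin d → ℂ) → Fin d → ℂ)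
    (hW : ∀ (z : Fin d → ℂ) (k : Fin d),
      W z k = z k - p.eval (z k) / ∏ j ∈ univ.erase k, (z k - z j))
    (hWT : ∀ (z : Fin d → ℂ) (k : Fin d),
      WT z k = z k - Tp.eval (z k) / ∏ j ∈ univ.erase k, (z k - z j))
    (z : Fin d → ℂ) (hz : Function.Injective z) :
    ∀ k : Fin d, WT (fun i => a * z i + b) k = a * W z k + b :=
  weierstrass_affine_conjugation_general d α a b p Tp hp hTp W WT hW hWT z
end

section
/- Degree reduction for the Weierstrass method: let p be a monic polynomial of degree d, and let z ∈ ℂ^d have pairwise distinct entries. If z_k is a root of p for some fixed index k, then the k-th component of W_p(z) equals z_k, and the remaining components of W_p(z) agree with the components of the Weierstrass map of the degree-(d−1) polynomial p(Z)/(Z − z_k) applied to the vector of remaining entries. -/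
open Polynomial Finset

theorem Polynomial.eval_X_sub_C_mul_div_prod {K ι : Type*} [Field K] [DecidableEq ι]
    {s : Finset ι} {f : ι → K} {k : ι} (hk : k ∈ s) {x : K} (hx : x ≠ f k) (q : K[X]) :
    ((X - C (f k)) * q).eval x / ∏ i ∈ s, (x - f i) = q.eval x / ∏ i ∈ s.erase k, (x - f i) := by
  rw [← mul_prod_erase s _ hk, eval_mul, eval_sub, eval_X, eval_C,
    mul_div_mul_left _ _ (sub_ne_zero.mpr hx)]

theorem weierstrass_degree_reduction_general
    (d : ℕ) (p q : Polynomial ℂ)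
    (z : Fin d → ℂ) (hz : Function.Injective z) (k : Fin d)
    (hroot : p.eval (z k) = 0)
    (hq : p = (X - C (z k)) * q)
    (W : (Fin d → ℂ) → Fin d → ℂ)
    (hW : ∀ (w : Fin d → ℂ) (i : Fin d),
      W w i = w i - p.eval (w i) / ∏ j ∈ univ.erase i, (w i - w j)) :
    W z k = z k ∧
      ∀ j : Fin d, j ≠ k →
        W z j = z j - q.eval (z j) / ∏ i ∈ (univ.erase j).erase k, (z j - z i) := by
  refine ⟨by rw [hW, hroot, zero_div, sub_zero], fun j hjk => ?_⟩
  rw [hW, hq, eval_X_sub_C_mul_div_prod (mem_erase.mpr ⟨hjk.symm, mem_univ k⟩) (hz.ne hjk)]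

/-- Degree reduction for the Weierstrass method: if `z_k` is a root of the monic
polynomial `p = (X - z_k) * q` and `z` has pairwise distinct entries, then the
`k`-th component of `W_p(z)` is `z_k`, and for `j ≠ k` the `j`-th component of
`W_p(z)` equals the corresponding component of the Weierstrass map of `q`
applied to the vector of remaining entries. -/
theorem weierstrass_degree_reduction
    (d : ℕ) (p q : Polynomial ℂ) (hmonic : p.Monic) (hdeg : p.natDegree = d)
    (z : Fin d → ℂ) (hz : Function.Injective z) (k : Fin d)
    (hroot : p.eval (z k) = 0)
    (hq : p = (X - C (z k)) * q)
    (W : (Fin d → ℂ) → Fin d → ℂ)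
    (hW : ∀ (w : Fin d → ℂ) (i : Fin d),
      W w i = w i - p.eval (w i) / ∏ j ∈ univ.erase i, (w i - w j)) :
    W z k = z k ∧
      ∀ j : Fin d, j ≠ k →
        W z j = z j - q.eval (z j) / ∏ i ∈ (univ.erase j).erase k, (z j - z i) :=
  weierstrass_degree_reduction_general d p q z hz k hroot hq W hW
end

section
/- The Weierstrass method satisfies the polynomial identity of Newton's method in d dimensions: if z ∈ ℂ^d has pairwise distinct entries and z' = W_p(z), then Σ_{k=1}^d (z'_k − z_k) · ∏_{j≠k}(Z − z_j) = ∏_{k=1}^d (Z − z_k) − p(Z) as polynomials in Z. -/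
open Polynomial Finset

/-!
The polynomial `∏ₖ (Z - zₖ) - p` has degree `< d`, because both terms are monic of degree `d`, so
it equals its Lagrange interpolant at the `d` distinct nodes `zₖ`. At `zₖ` it takes the value
`-p(zₖ)`, and dividing by `∏_{j≠k} (zₖ - zⱼ)` turns this into the Weierstrass correction
`z'ₖ - zₖ`.
-/

theorem Polynomial.Monic.degree_sub_lt_of_natDegree_eq {R : Type*} [Ring R] [Nontrivial R]
    {p q : R[X]} (hp : p.Monic) (hq : q.Monic) (h : p.natDegree = q.natDegree) :
    (p - q).degree < p.natDegree := by
  rw [← degree_eq_natDegree hp.ne_zero]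
  refine degree_sub_lt_left ?_ hp.ne_zero (by rw [hp.leadingCoeff, hq.leadingCoeff])
  rw [degree_eq_natDegree hp.ne_zero, degree_eq_natDegree hq.ne_zero, h]

namespace Lagrange

variable {F ι : Type*} [Field F] [DecidableEq ι] {s : Finset ι} {v : ι → F}

theorem basis_eq_C_nodalWeight_mul_nodal_erase (s : Finset ι) (v : ι → F) (i : ι) :
    Lagrange.basis s v i = C (nodalWeight s v i) * nodal (s.erase i) v := by
  simp only [Lagrange.basis, basisDivisor, nodalWeight, nodal, prod_mul_distrib, map_prod]

theorem eq_sum_C_mul_nodal_erase {f : F[X]} (hvs : Set.InjOn v s) (hf : f.degree < #s) :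
    f = ∑ i ∈ s, C (f.eval (v i) * nodalWeight s v i) * nodal (s.erase i) v := by
  conv_lhs => rw [eq_interpolate hvs hf, interpolate_apply]
  simp only [basis_eq_C_nodalWeight_mul_nodal_erase, C_mul, mul_assoc]

end Lagrange

/-- The Weierstrass iteration satisfies the polynomial identity of Newton's method
in `d` dimensions: if `z` has pairwise distinct entries and `z' = W_p(z)`, then
`∑_k (z'_k − z_k) ∏_{j≠k} (Z − z_j) = ∏_k (Z − z_k) − p(Z)` as polynomials in `Z`. -/
theorem weierstrass_polynomial_identity
    (d : ℕ) (p : Polynomial ℂ) (hmonic : p.Monic) (hdeg : p.natDegree = d)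
    (z z' : Fin d → ℂ) (hz : Function.Injective z)
    (hW : ∀ k : Fin d,
      z' k = z k - p.eval (z k) / ∏ j ∈ univ.erase k, (z k - z j)) :
    ∑ k : Fin d, C (z' k - z k) * ∏ j ∈ univ.erase k, (X - C (z j))
      = (∏ k : Fin d, (X - C (z k))) - p := by
  have hnodal : (Lagrange.nodal univ z).natDegree = p.natDegree := by
    rw [Lagrange.natDegree_nodal, card_univ, Fintype.card_fin, hdeg]
  have hdeg_lt : (Lagrange.nodal univ z - p).degree < #(univ : Finset (Fin d)) := by
    simpa only [hnodal, hdeg, card_univ, Fintype.card_fin] using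
      Lagrange.nodal_monic.degree_sub_lt_of_natDegree_eq hmonic hnodal
  have hcorrection : ∀ k, z' k - z k =
      (Lagrange.nodal univ z - p).eval (z k) * Lagrange.nodalWeight univ z k := by
    intro k
    rw [hW k, eval_sub, Lagrange.eval_nodal_at_node (mem_univ k), Lagrange.nodalWeight,
      prod_inv_distrib]
    ring
  rw [← Lagrange.nodal_eq, Lagrange.eq_sum_C_mul_nodal_erase hz.injOn hdeg_lt]
  simp only [hcorrection, Lagrange.nodal_eq]
end

section
/- For p(Z) = Z³ and z in the hyperplane H = {z₁ + z₂ + z₃ = 0}, the Weierstrass map is homogeneous of degree 1: W_{Z³}(λ·z) = λ·W_{Z³}(z) for all λ ∈ ℂ, λ ≠ 0, and all z ∈ H with pairwise distinct entries. Moreover, W_{Z³}(1, z, −1−z) = s(z)·(1, φ(z), −1−φ(z)) where s(z) = (1 − z − z²)/(2 − z − z²) and φ(z) = z(2+z)(1+z−z²)/((1+2z)(1−z−z²)), for all z for which all expressions are defined and nondegenerate. -/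
/-!
The correction term `zₖⁿ / ∏_{j ≠ k} (zₖ - zⱼ)` of the Weierstrass iteration for `Zⁿ` is a
quotient of homogeneous forms of degrees `n` and `n - 1`, so the map commutes with scaling.
On the line `(1, z, -1 - z)` the three denominators factor as `(1 - z)(2 + z)`, `(z - 1)(1 + 2z)`
and `(2 + z)(1 + 2z)`, and the formula for `s` and `φ` is a direct computation.
-/

open Polynomial Finset

variable {K : Type*} [Field K]

noncomputable def weierstrassMap {n : ℕ} (p : K[X]) (z : Fin n → K) (k : Fin n) : K :=
  z k - p.eval (z k) / ∏ j ∈ univ.erase k, (z k - z j)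

theorem weierstrassMap_X_pow_smul {n : ℕ} (c : K) (z : Fin n → K) :
    weierstrassMap (X ^ n) (c • z) = c • weierstrassMap (X ^ n) z := by
  funext k
  have hpow : c ^ n = c ^ (univ.erase k).card * c := by
    rw [← pow_succ, card_erase_of_mem (mem_univ k), card_univ, Fintype.card_fin,
      Nat.sub_add_cancel k.pos]
  have hprod : ∏ j ∈ univ.erase k, (c * z k - c * z j) =
      c ^ (univ.erase k).card * ∏ j ∈ univ.erase k, (z k - z j) := by
    simp_rw [← mul_sub, prod_mul_distrib, prod_const]
  simp only [weierstrassMap, Pi.smul_apply, smul_eq_mul, eval_pow, eval_X, hprod, mul_pow, hpow]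
  rcases eq_or_ne c 0 with rfl | hc
  · simp
  · rw [mul_assoc, mul_div_mul_left _ _ (pow_ne_zero _ hc)]
    ring

theorem weierstrassMap_fin_three (p : K[X]) (a b c : K) :
    weierstrassMap p ![a, b, c] =
      ![a - p.eval a / ((a - b) * (a - c)), b - p.eval b / ((b - a) * (b - c)),
        c - p.eval c / ((c - a) * (c - b))] := by
  funext k
  fin_cases k <;>
    simp [weierstrassMap, show univ.erase (0 : Fin 3) = {1, 2} by decide,
      show univ.erase (1 : Fin 3) = {0, 2} by decide, show univ.erase (2 : Fin 3) = {0, 1} by decide]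

/-- The scalar factor `s` of the paper. -/
noncomputable def cubicLineScale (z : K) : K := (1 - z - z ^ 2) / (2 - z - z ^ 2)

/-- The rational map `φ` induced on the line `(1, z, -1 - z)`. -/
noncomputable def cubicLineMap (z : K) : K :=
  z * (2 + z) * (1 + z - z ^ 2) / ((1 + 2 * z) * (1 - z - z ^ 2))

theorem weierstrassMap_X_pow_three_line {z : K} (h₁ : 1 - z ≠ 0) (h₂ : 2 + z ≠ 0)
    (h₃ : 1 + 2 * z ≠ 0) (h₄ : 1 - z - z ^ 2 ≠ 0) :
    weierstrassMap (X ^ 3) ![1, z, -1 - z] =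
      cubicLineScale z • ![1, cubicLineMap z, -1 - cubicLineMap z] := by
  have h₁' : z - 1 ≠ 0 := by rwa [← neg_ne_zero, neg_sub]
  rw [weierstrassMap_fin_three, cubicLineScale, cubicLineMap,
    show (2 : K) - z - z ^ 2 = (1 - z) * (2 + z) by ring]
  simp only [Matrix.smul_cons, Matrix.smul_empty, smul_eq_mul, Matrix.vecCons_inj, eval_pow, eval_X,
    show (1 : K) - (-1 - z) = 2 + z by ring, show z - (-1 - z) = 1 + 2 * z by ring,
    show -1 - z - 1 = -(2 + z) by ring, show -1 - z - z = -(1 + 2 * z) by ring]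
  -- `field_simp` normalises `1 + 2 * z` to `1 + z * 2` before looking for side conditions.
  have h₃' : 1 + z * 2 ≠ 0 := by rwa [mul_comm]
  refine ⟨?_, ?_, ?_, trivial⟩ <;> field_simp <;> ring

/-- For `p(Z) = Z³` on the hyperplane `z₁+z₂+z₃ = 0`, the Weierstrass map is
homogeneous of degree 1, and on the line `(1, z, −1−z)` it acts as
`W(1, z, −1−z) = s(z)·(1, φ(z), −1−φ(z))` with
`s(z) = (1−z−z²)/(2−z−z²)` and `φ(z) = z(2+z)(1+z−z²)/((1+2z)(1−z−z²))`. -/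
theorem weierstrass_cubic_homogeneous_and_projectivized
    (W : (Fin 3 → ℂ) → Fin 3 → ℂ)
    (hW : ∀ (w : Fin 3 → ℂ) (k : Fin 3),
      W w k = w k - (w k) ^ 3 / ∏ j ∈ univ.erase k, (w k - w j)) :
    (∀ (z : Fin 3 → ℂ), Function.Injective z → z 0 + z 1 + z 2 = 0 →
      ∀ (l : ℂ), l ≠ 0 → W (fun k => l * z k) = fun k => l * W z k) ∧
    (∀ z : ℂ, (1 : ℂ) ≠ z → z ≠ -1 - z → (1 : ℂ) ≠ -1 - z →
      1 + 2 * z ≠ 0 → 1 - z - z ^ 2 ≠ 0 → 2 - z - z ^ 2 ≠ 0 →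
      W ![1, z, -1 - z] =
        fun k => ((1 - z - z ^ 2) / (2 - z - z ^ 2)) *
          ![1, z * (2 + z) * (1 + z - z ^ 2) / ((1 + 2 * z) * (1 - z - z ^ 2)),
            -1 - z * (2 + z) * (1 + z - z ^ 2) / ((1 + 2 * z) * (1 - z - z ^ 2))] k) := by
  have hW' : W = weierstrassMap (X ^ 3) := by
    funext w k
    simp [hW, weierstrassMap]
  subst hW'
  refine ⟨fun z _ _ l _ => weierstrassMap_X_pow_smul l z, fun z h₁ _ h₂ h₃ h₄ _ => ?_⟩
  exact weierstrassMap_X_pow_three_line (sub_ne_zero.mpr h₁)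
    (by contrapose! h₂; linear_combination h₂) h₃ h₄
end

section
/- The rational map φ(z) = z(2+z)(1+z−z²)/((1+2z)(1−z−z²)) fixes the primitive cube roots of unity ω = e^{2πi/3} and ω², and its derivative at each of these fixed points has absolute value strictly less than 1 (so both are attracting fixed points). Moreover, the scalar s(z) = (1−z−z²)/(2−z−z²) satisfies s(ω) = s(ω²) = 2/3. -/
/-!
Writing `N` and `D` for the numerator and denominator of `φ`, one has the identity
`N - z D = z (1 + z) (z² + z + 1)`, so `φ(z) = z + q(z) (z² + z + 1)` with `q = z (1 + z) / D`
wherever `D ≠ 0`. At a root `u` of `z² + z + 1` this gives `φ(u) = u` and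
`φ'(u) = 1 + q(u) (2u + 1) = 1 + (u² + u) / 2 = 1/2`, since `1 - u - u² = 2` and
`D(u) = 2 (1 + 2u)`.
-/

open Complex Filter Topology

theorem hasDerivAt_id_add_mul_of_eq_zero {𝕜 : Type*} [NontriviallyNormedField 𝕜]
    {q h : 𝕜 → 𝕜} {u h' : 𝕜} (hq : DifferentiableAt 𝕜 q u) (hh : HasDerivAt h h' u)
    (hu : h u = 0) : HasDerivAt (fun z => z + q z * h z) (1 + q u * h') u :=
  ((hasDerivAt_id' u).add (hq.hasDerivAt.mul hh)).congr_deriv (by simp [hu])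

theorem IsPrimitiveRoot.sq_add_self_add_one {R : Type*} [CommRing R] [IsDomain R] {ζ : R}
    (hζ : IsPrimitiveRoot ζ 3) : ζ ^ 2 + ζ + 1 = 0 := by
  have h := hζ.geom_sum_eq_zero (by norm_num)
  simp only [Finset.sum_range_succ, Finset.sum_range_zero] at h
  linear_combination h

namespace WeierstrassCube

variable {K : Type*} [Field K]

def phi (z : K) : K := z * (2 + z) * (1 + z - z ^ 2) / ((1 + 2 * z) * (1 - z - z ^ 2))

def scale (z : K) : K := (1 - z - z ^ 2) / (2 - z - z ^ 2)

def correction (z : K) : K := z * (1 + z) / ((1 + 2 * z) * (1 - z - z ^ 2))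

theorem phi_eq_add_correction_mul {z : K} (hD : (1 + 2 * z) * (1 - z - z ^ 2) ≠ 0) :
    phi z = z + correction z * (z ^ 2 + z + 1) := by
  unfold phi correction
  rw [div_mul_eq_mul_div, add_div' _ _ _ hD]
  ring

variable {u : K}

theorem one_sub_self_sub_sq_of_root (hu : u ^ 2 + u + 1 = 0) : 1 - u - u ^ 2 = 2 := by
  linear_combination -hu

theorem one_add_two_mul_ne_zero_of_root [NeZero (3 : K)] (hu : u ^ 2 + u + 1 = 0) :
    1 + 2 * u ≠ 0 := by
  intro h
  have : (3 : K) = 0 := by linear_combination 4 * hu - (2 * u + 1) * h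
  exact three_ne_zero this

theorem denom_ne_zero_of_root [NeZero (2 : K)] [NeZero (3 : K)] (hu : u ^ 2 + u + 1 = 0) :
    (1 + 2 * u) * (1 - u - u ^ 2) ≠ 0 := by
  rw [one_sub_self_sub_sq_of_root hu]
  exact mul_ne_zero (one_add_two_mul_ne_zero_of_root hu) two_ne_zero

theorem phi_of_root [NeZero (2 : K)] [NeZero (3 : K)] (hu : u ^ 2 + u + 1 = 0) :
    phi u = u := by
  rw [phi_eq_add_correction_mul (denom_ne_zero_of_root hu), hu, mul_zero, add_zero]

theorem scale_of_root (hu : u ^ 2 + u + 1 = 0) : scale u = 2 / 3 := by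
  unfold scale
  rw [one_sub_self_sub_sq_of_root hu, show 2 - u - u ^ 2 = 3 by linear_combination -hu]

theorem hasDerivAt_phi_of_root {𝕜 : Type*} [NontriviallyNormedField 𝕜] [NeZero (2 : 𝕜)]
    [NeZero (3 : 𝕜)] {u : 𝕜} (hu : u ^ 2 + u + 1 = 0) : HasDerivAt phi (1 / 2) u := by
  have hD := denom_ne_zero_of_root hu
  have hphi : phi =ᶠ[𝓝 u] fun z => z + correction z * (z ^ 2 + z + 1) := by
    have hcont : ContinuousAt (fun z : 𝕜 => (1 + 2 * z) * (1 - z - z ^ 2)) u := by fun_prop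
    filter_upwards [hcont.eventually_ne hD] with z hz
    exact phi_eq_add_correction_mul hz
  have hq : DifferentiableAt 𝕜 correction u := by
    unfold correction
    fun_prop (disch := exact hD)
  have hh : HasDerivAt (fun z : 𝕜 => z ^ 2 + z + 1) (1 + 2 * u) u :=
    (((hasDerivAt_pow 2 u).add (hasDerivAt_id' u)).add_const 1).congr_deriv (by ring)
  refine ((hasDerivAt_id_add_mul_of_eq_zero hq hh hu).congr_of_eventuallyEq
    hphi).congr_deriv ?_
  calc 1 + correction u * (1 + 2 * u) = 1 + u * (1 + u) / 2 := by
        rw [correction, one_sub_self_sub_sq_of_root hu, mul_comm _ (2 : 𝕜), ← div_div,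
          div_mul_cancel₀ _ (one_add_two_mul_ne_zero_of_root hu)]
    _ = 1 / 2 := by
        field_simp
        linear_combination hu

end WeierstrassCube

/-- The rational map `φ(z) = z(2+z)(1+z−z²)/((1+2z)(1−z−z²))` fixes the primitive
cube roots of unity `ω = e^{2πi/3}` and `ω²`, and both are attracting fixed
points (`|φ'| < 1` there); moreover `s(ω) = s(ω²) = 2/3` for
`s(z) = (1−z−z²)/(2−z−z²)`. -/
theorem phi_attracting_cube_roots
    (φ s : ℂ → ℂ)
    (hφ : ∀ z, φ z = z * (2 + z) * (1 + z - z ^ 2) / ((1 + 2 * z) * (1 - z - z ^ 2)))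
    (hs : ∀ z, s z = (1 - z - z ^ 2) / (2 - z - z ^ 2))
    (ω : ℂ) (hω : ω = Complex.exp (2 * Real.pi * Complex.I / 3)) :
    φ ω = ω ∧ φ (ω ^ 2) = ω ^ 2 ∧
      ‖deriv φ ω‖ < 1 ∧ ‖deriv φ (ω ^ 2)‖ < 1 ∧
      s ω = 2 / 3 ∧ s (ω ^ 2) = 2 / 3 := by
  obtain rfl : φ = WeierstrassCube.phi := funext hφ
  obtain rfl : s = WeierstrassCube.scale := funext hs
  have hω₁ : IsPrimitiveRoot ω 3 := by
    simpa [hω] using Complex.isPrimitiveRoot_exp 3 (by norm_num)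
  have hω₂ : IsPrimitiveRoot (ω ^ 2) 3 := hω₁.pow_of_coprime 2 (by norm_num)
  have hu₁ := hω₁.sq_add_self_add_one
  have hu₂ := hω₂.sq_add_self_add_one
  have half_lt_one : ‖(1 / 2 : ℂ)‖ < 1 := by norm_num
  refine ⟨WeierstrassCube.phi_of_root hu₁, WeierstrassCube.phi_of_root hu₂, ?_, ?_,
    WeierstrassCube.scale_of_root hu₁, WeierstrassCube.scale_of_root hu₂⟩
  · rwa [(WeierstrassCube.hasDerivAt_phi_of_root hu₁).deriv]
  · rwa [(WeierstrassCube.hasDerivAt_phi_of_root hu₂).deriv]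
end

section
/- Convergence of the Weierstrass method for Z³: if z ∈ ℂ³ lies in the hyperplane z₁ + z₂ + z₃ = 0 and z is not a scalar multiple of a vector with all real entries, then the orbit of z under W_{Z³} is defined for all iterates and converges to the zero vector, with linear rate of convergence 2/3 (i.e., ‖W_{Z³}^{∘(n+1)}(z)‖ / ‖W_{Z³}^{∘n}(z)‖ → 2/3). -/
open Polynomial Finset Filter

/-!
Let `ω` be a primitive cube root of unity, `e = (ω ^ k)ₖ` and `ē = (ω ^ 2k)ₖ`. Every `z` with
`z₀ + z₁ + z₂ = 0` is `p • e + q • ē`, and it is a complex multiple of a real vector when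
`|p| = |q|`. Exchanging `ω` and `ω²` swaps `e` and `ē`, so `z = P • (e + r • ē)` with `|r| < 1`.
The `k`-th component of `e + r • ē` is `ζ (1 + r ζ)` with `ζ = ω ^ k`; by this cyclic symmetry a
Weierstrass step reduces to a one-variable identity and sends `P • (e + r • ē)` to
`P σ(r) • (e + φ(r) • ē)`, with `σ(r) = (2 - r³) / (3 (1 - r³))` and
`φ(r) = r (1 - 2 r³) / (2 - r³)`. This `φ` is the paper's `φ` after the change of variable
`w = (ω + r ω²) / (1 + r)`, which moves its attracting fixed point `ω` to `0`.
Since `|1 - 2x|² + 3 (1 - |x|²) = |2 - x|²`, `φ` contracts the unit disc towards `0`; the ratio of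
consecutive norms is a continuous function of `φ^[n] r → 0`, so it tends to `σ(0) = 2/3`, and the
ratio test gives convergence to `0`.
-/

open ComplexConjugate

noncomputable section

def weierstrassCubic (w : Fin 3 → ℂ) : Fin 3 → ℂ :=
  fun k => w k - w k ^ 3 / ∏ j ∈ univ.erase k, (w k - w j)

def fourierVec (ω r : ℂ) (k : Fin 3) : ℂ := ω ^ (k : ℕ) + r * (ω ^ (k : ℕ)) ^ 2

def ratioMap (r : ℂ) : ℂ := r * (1 - 2 * r ^ 3) / (2 - r ^ 3)

def scaleFactor (r : ℂ) : ℂ := (2 - r ^ 3) / (3 * (1 - r ^ 3))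

end

theorem Fin.prod_univ_erase_three {M : Type*} [CommMonoid M] (g : Fin 3 → M) (k : Fin 3) :
    ∏ j ∈ univ.erase k, g j = g (k + 1) * g (k + 2) := by
  rw [show univ.erase k = {k + 1, k + 2} by fin_cases k <;> decide,
    prod_pair (by fin_cases k <;> decide)]

theorem weierstrassCubic_smul (c : ℂ) (w : Fin 3 → ℂ) :
    weierstrassCubic (c • w) = c • weierstrassCubic w := by
  funext k
  have hprod : ∏ j ∈ univ.erase k, (c * w k - c * w j) =
      c ^ 2 * ∏ j ∈ univ.erase k, (w k - w j) := by
    simp_rw [← mul_sub, prod_mul_distrib, prod_const, card_erase_of_mem (mem_univ k), card_univ,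
      Fintype.card_fin]
  simp only [weierstrassCubic, Pi.smul_apply, smul_eq_mul, hprod]
  rcases eq_or_ne c 0 with rfl | hc
  · simp
  · rw [mul_pow, pow_succ c 2, mul_assoc, mul_div_mul_left _ _ (pow_ne_zero 2 hc), mul_sub,
      mul_div_assoc]

section CubeRoot

variable {ω : ℂ}

theorem pow_three_eq_one_of_sq_add_self_add_one (hω : ω ^ 2 + ω + 1 = 0) : ω ^ 3 = 1 := by
  linear_combination (ω - 1) * hω

theorem pow_pow_three_eq_one (hω : ω ^ 2 + ω + 1 = 0) (n : ℕ) : (ω ^ n) ^ 3 = 1 := by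
  rw [← pow_mul, mul_comm, pow_mul, pow_three_eq_one_of_sq_add_self_add_one hω, one_pow]

theorem pow_mod_three (hω : ω ^ 3 = 1) (n : ℕ) : ω ^ (n % 3) = ω ^ n := by
  conv_rhs => rw [← Nat.mod_add_div n 3, pow_add, pow_mul, hω, one_pow, mul_one]

theorem exists_cubeRoot_conj_eq_sq : ∃ ω : ℂ, ω ^ 2 + ω + 1 = 0 ∧ conj ω = ω ^ 2 := by
  have hs : Real.sqrt 3 ^ 2 = 3 := Real.sq_sqrt (by norm_num)
  refine ⟨⟨-1 / 2, Real.sqrt 3 / 2⟩, ?_, ?_⟩ <;>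
    apply Complex.ext <;>
    simp only [sq, Complex.add_re, Complex.add_im, Complex.mul_re, Complex.mul_im,
      Complex.one_re, Complex.one_im, Complex.zero_re, Complex.zero_im, Complex.conj_re,
      Complex.conj_im, add_zero] <;>
    nlinarith [hs]

end CubeRoot

section FourierCoordinates

variable {ω : ℂ}

theorem exists_fourier_coeffs (hω : ω ^ 2 + ω + 1 = 0) {z : Fin 3 → ℂ}
    (hz : z 0 + z 1 + z 2 = 0) :
    ∃ p q : ℂ, ∀ k : Fin 3, z k = p * ω ^ (k : ℕ) + q * (ω ^ (k : ℕ)) ^ 2 := by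
  refine ⟨(z 0 + ω ^ 2 * z 1 + ω * z 2) / 3, (z 0 + ω * z 1 + ω ^ 2 * z 2) / 3, fun k => ?_⟩
  have hω3 := pow_three_eq_one_of_sq_add_self_add_one hω
  fin_cases k <;> simp only [Fin.zero_eta, Fin.mk_one, Fin.reduceFinMk, Fin.isValue, pow_zero,
    pow_one, mul_one, one_pow]
  · linear_combination hz / 3 - (z 1 + z 2) / 3 * hω
  · linear_combination hz / 3 - (z 0 + z 2) / 3 * hω - (2 * z 1 + ω * z 2) / 3 * hω3
  · linear_combination hz / 3 - (z 0 + z 1) / 3 * hω -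
      ((ω ^ 3 + 2) * z 2 + ω * z 0 + (ω + ω ^ 2) * z 1) / 3 * hω3

theorem Complex.exists_mul_eq_and_mul_conj_eq_of_norm_eq {p q : ℂ} (h : ‖p‖ = ‖q‖) :
    ∃ l c : ℂ, p = l * c ∧ q = l * conj c := by
  rcases eq_or_ne q 0 with rfl | hq
  · exact ⟨0, 0, by simpa using h, by simp⟩
  obtain ⟨c, hc⟩ := IsAlgClosed.exists_pow_nat_eq (p / q) two_pos
  have hc1 : c * conj c = 1 := by
    have hnorm : ‖c‖ ^ 2 = 1 := by
      rw [← norm_pow, hc, norm_div, h, div_self (norm_ne_zero_iff.mpr hq)]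
    rw [Complex.mul_conj, Complex.normSq_eq_norm_sq, hnorm, Complex.ofReal_one]
  exact ⟨q * c, c, by rw [mul_assoc, ← sq, hc, mul_div_cancel₀ _ hq],
    by rw [mul_assoc, hc1, mul_one]⟩

theorem exists_mul_real_of_norm_eq (hω : conj ω = ω ^ 2) {p q : ℂ} (h : ‖p‖ = ‖q‖) :
    ∃ (l : ℂ) (x : Fin 3 → ℝ), ∀ k : Fin 3, p * ω ^ (k : ℕ) + q * (ω ^ (k : ℕ)) ^ 2 = l * x k := by
  obtain ⟨l, c, rfl, rfl⟩ := Complex.exists_mul_eq_and_mul_conj_eq_of_norm_eq h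
  refine ⟨l, fun k => 2 * (c * ω ^ (k : ℕ)).re, fun k => ?_⟩
  have hζ : (ω ^ (k : ℕ)) ^ 2 = conj (ω ^ (k : ℕ)) := by
    rw [map_pow, hω, ← pow_mul, ← pow_mul, mul_comm]
  rw [hζ, mul_assoc, mul_assoc, ← mul_add, ← map_mul, Complex.add_conj]

theorem exists_eq_smul_fourierVec {z : Fin 3 → ℂ} (hz : z 0 + z 1 + z 2 = 0)
    (hreal : ¬ ∃ (l : ℂ) (x : Fin 3 → ℝ), z = fun k => l * (x k : ℂ)) :
    ∃ ω P r : ℂ, ω ^ 2 + ω + 1 = 0 ∧ P ≠ 0 ∧ ‖r‖ < 1 ∧ z = P • fourierVec ω r := by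
  obtain ⟨ω, hω, hconj⟩ := exists_cubeRoot_conj_eq_sq
  obtain ⟨p, q, hpq⟩ := exists_fourier_coeffs hω hz
  have hne : ‖p‖ ≠ ‖q‖ := fun h => hreal <| by
    obtain ⟨l, x, hx⟩ := exists_mul_real_of_norm_eq hconj h
    exact ⟨l, x, funext fun k => (hpq k).trans (hx k)⟩
  rcases hne.lt_or_gt with hlt | hlt
  · have hq : q ≠ 0 := norm_pos_iff.mp ((norm_nonneg p).trans_lt hlt)
    refine ⟨ω ^ 2, q, p / q, by linear_combination (ω ^ 2 - ω + 1) * hω, hq,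
      by rwa [norm_div, div_lt_one (norm_pos_iff.mpr hq)], funext fun k => ?_⟩
    have hsq : (ω ^ 2) ^ (k : ℕ) = (ω ^ (k : ℕ)) ^ 2 := by rw [← pow_mul, ← pow_mul, mul_comm]
    rw [hpq k, Pi.smul_apply, smul_eq_mul, fourierVec, hsq, mul_add, ← mul_assoc,
      mul_div_cancel₀ _ hq]
    linear_combination -p * ω ^ (k : ℕ) * pow_pow_three_eq_one hω k
  · have hp : p ≠ 0 := norm_pos_iff.mp ((norm_nonneg q).trans_lt hlt)
    refine ⟨ω, p, q / p, hω, hp, by rwa [norm_div, div_lt_one (norm_pos_iff.mpr hp)],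
      funext fun k => ?_⟩
    rw [hpq k, Pi.smul_apply, smul_eq_mul, fourierVec, mul_add, ← mul_assoc,
      mul_div_cancel₀ _ hp]

end FourierCoordinates

section Step

variable {ω r : ℂ}

theorem one_add_add_sq_ne_zero {u : ℂ} (h : u ^ 3 ≠ 1) : 1 + u + u ^ 2 ≠ 0 :=
  fun h' => h (by linear_combination (u - 1) * h')

theorem fourierVec_add (hω : ω ^ 3 = 1) (k j : Fin 3) :
    fourierVec ω r (k + j) =
      ω ^ (j : ℕ) * ω ^ (k : ℕ) + r * (ω ^ (j : ℕ) * ω ^ (k : ℕ)) ^ 2 := by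
  rw [fourierVec, Fin.val_add, pow_mod_three hω, ← pow_add, add_comm (j : ℕ)]

theorem fourierVec_prod_erase_sub (hω : ω ^ 2 + ω + 1 = 0) (k : Fin 3) :
    ∏ j ∈ univ.erase k, (fourierVec ω r k - fourierVec ω r j) =
      3 * (ω ^ (k : ℕ)) ^ 2 * (1 + r * ω ^ (k : ℕ) + (r * ω ^ (k : ℕ)) ^ 2) := by
  have hω3 := pow_three_eq_one_of_sq_add_self_add_one hω
  rw [Fin.prod_univ_erase_three, fourierVec_add hω3, fourierVec_add hω3]
  set ζ := ω ^ (k : ℕ)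
  set u := r * ζ
  have hA : (1 - ω) * (1 - ω ^ 2) = 3 := by linear_combination (ω - 2) * hω
  have hB : (1 + u * (1 + ω)) * (1 + u * (1 + ω ^ 2)) = 1 + u + u ^ 2 := by
    linear_combination (u + u ^ 2 * ω) * hω
  calc _ = ζ ^ 2 * ((1 - ω) * (1 - ω ^ 2)) * ((1 + u * (1 + ω)) * (1 + u * (1 + ω ^ 2))) := by
        simp only [Fin.val_one, Fin.val_two, pow_one, fourierVec, u]; ring
    _ = _ := by rw [hA, hB]; ring

theorem fourierVec_injective (hω : ω ^ 2 + ω + 1 = 0) (hr : r ^ 3 ≠ 1) :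
    Function.Injective (fourierVec ω r) := by
  intro i j hij
  by_contra hne
  have hprod := fourierVec_prod_erase_sub (r := r) hω i
  rw [prod_eq_zero (mem_erase.mpr ⟨Ne.symm hne, mem_univ j⟩) (sub_eq_zero.mpr hij)] at hprod
  have hζ := pow_pow_three_eq_one hω i
  have hζ0 : ω ^ (i : ℕ) ≠ 0 := fun h => by simp [h] at hζ
  refine mul_ne_zero (mul_ne_zero three_ne_zero (pow_ne_zero 2 hζ0))
    (one_add_add_sq_ne_zero ?_) hprod.symm
  rwa [mul_pow, hζ, mul_one]

theorem one_add_sub_cube_div {u : ℂ} (h1 : u ^ 3 ≠ 1) (h2 : u ^ 3 ≠ 2) :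
    1 + u - (1 + u) ^ 3 / (3 * (1 + u + u ^ 2)) = scaleFactor u * (1 + ratioMap u) := by
  have hQ := one_add_add_sq_ne_zero h1
  have h1' : 1 - u ^ 3 ≠ 0 := sub_ne_zero.mpr h1.symm
  have h2' : 2 - u ^ 3 ≠ 0 := sub_ne_zero.mpr h2.symm
  rw [scaleFactor, ratioMap]
  field_simp
  ring

theorem scaleFactor_ne_zero {r : ℂ} (h1 : r ^ 3 ≠ 1) (h2 : r ^ 3 ≠ 2) : scaleFactor r ≠ 0 :=
  div_ne_zero (sub_ne_zero.mpr h2.symm) (mul_ne_zero three_ne_zero (sub_ne_zero.mpr h1.symm))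

theorem scaleFactor_mul {ζ : ℂ} (hζ : ζ ^ 3 = 1) (r : ℂ) :
    scaleFactor (r * ζ) = scaleFactor r := by
  rw [scaleFactor, scaleFactor, mul_pow, hζ, mul_one]

theorem ratioMap_mul {ζ : ℂ} (hζ : ζ ^ 3 = 1) (r : ℂ) : ratioMap (r * ζ) = ratioMap r * ζ := by
  rw [ratioMap, ratioMap, mul_pow, hζ, mul_one]; ring

theorem weierstrassCubic_fourierVec (hω : ω ^ 2 + ω + 1 = 0) (h1 : r ^ 3 ≠ 1) (h2 : r ^ 3 ≠ 2) :
    weierstrassCubic (fourierVec ω r) = scaleFactor r • fourierVec ω (ratioMap r) := by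
  funext k
  have hζ := pow_pow_three_eq_one hω k
  rw [weierstrassCubic, fourierVec_prod_erase_sub hω]
  simp only [fourierVec, Pi.smul_apply, smul_eq_mul]
  set ζ := ω ^ (k : ℕ)
  have hu : (r * ζ) ^ 3 = r ^ 3 := by rw [mul_pow, hζ, mul_one]
  calc ζ + r * ζ ^ 2 - (ζ + r * ζ ^ 2) ^ 3 / (3 * ζ ^ 2 * (1 + r * ζ + (r * ζ) ^ 2))
      = ζ * (1 + r * ζ - (1 + r * ζ) ^ 3 / (3 * (1 + r * ζ + (r * ζ) ^ 2))) := by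
        field_simp
    _ = ζ * (scaleFactor (r * ζ) * (1 + ratioMap (r * ζ))) := by
        rw [one_add_sub_cube_div (hu ▸ h1) (hu ▸ h2)]
    _ = scaleFactor r * (ζ + ratioMap r * ζ ^ 2) := by
        rw [scaleFactor_mul hζ, ratioMap_mul hζ]; ring

end Step

section Dynamics

variable {r : ℂ}

theorem pow_three_ne_of_norm_lt_one {c : ℂ} (hr : ‖r‖ < 1) (hc : 1 ≤ ‖c‖) : r ^ 3 ≠ c := by
  rintro rfl
  rw [norm_pow] at hc
  exact hc.not_gt (pow_lt_one₀ (norm_nonneg r) hr three_ne_zero)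

theorem norm_one_sub_two_mul_sq_add (x : ℂ) :
    ‖1 - 2 * x‖ ^ 2 + 3 * (1 - ‖x‖ ^ 2) = ‖2 - x‖ ^ 2 := by
  simp only [Complex.sq_norm, Complex.normSq_apply, Complex.sub_re, Complex.sub_im,
    Complex.mul_re, Complex.mul_im, Complex.one_re, Complex.one_im, Complex.re_ofNat,
    Complex.im_ofNat]
  ring

theorem norm_ratioMap_sq_le (hr : ‖r‖ ≤ 1) :
    ‖ratioMap r‖ ^ 2 ≤ (2 + ‖r‖ ^ 6) / 3 * ‖r‖ ^ 2 := by
  set x := r ^ 3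
  have hx : ‖x‖ ≤ 1 := by rw [norm_pow]; exact pow_le_one₀ (norm_nonneg r) hr
  have hden : 0 < ‖2 - x‖ := by
    refine norm_pos_iff.mpr (sub_ne_zero.mpr fun h => ?_)
    rw [← h] at hx; norm_num at hx
  have hden3 : ‖2 - x‖ ≤ 3 := by
    calc ‖2 - x‖ ≤ ‖(2 : ℂ)‖ + ‖x‖ := norm_sub_le _ _
      _ ≤ 3 := by rw [Complex.norm_ofNat]; linarith
  have key : ‖1 - 2 * x‖ ^ 2 ≤ (2 + ‖x‖ ^ 2) / 3 * ‖2 - x‖ ^ 2 := by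
    have h9 : ‖2 - x‖ ^ 2 ≤ 9 := by nlinarith
    have hx2 : ‖x‖ ^ 2 ≤ 1 := by nlinarith [norm_nonneg x]
    nlinarith [norm_one_sub_two_mul_sq_add x, mul_nonneg (sub_nonneg.mpr hx2) (sub_nonneg.mpr h9)]
  have hx6 : ‖x‖ ^ 2 = ‖r‖ ^ 6 := by rw [norm_pow]; ring
  rw [ratioMap, norm_div, norm_mul, div_pow, mul_pow, div_le_iff₀ (by positivity), ← hx6]
  calc ‖r‖ ^ 2 * ‖1 - 2 * x‖ ^ 2 ≤ ‖r‖ ^ 2 * ((2 + ‖x‖ ^ 2) / 3 * ‖2 - x‖ ^ 2) := by gcongr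
    _ = _ := by ring

theorem norm_ratioMap_le (hr : ‖r‖ ≤ 1) : ‖ratioMap r‖ ≤ ‖r‖ := by
  have h6 : ‖r‖ ^ 6 ≤ 1 := pow_le_one₀ (norm_nonneg r) hr
  have hsq : ‖ratioMap r‖ ^ 2 ≤ ‖r‖ ^ 2 :=
    (norm_ratioMap_sq_le hr).trans (by nlinarith [sq_nonneg ‖r‖])
  exact (pow_le_pow_iff_left₀ (norm_nonneg _) (norm_nonneg _) two_ne_zero).mp hsq

theorem norm_ratioMap_iterate_le (hr : ‖r‖ ≤ 1) (n : ℕ) : ‖ratioMap^[n] r‖ ≤ ‖r‖ := by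
  induction n with
  | zero => rfl
  | succ n ih =>
    rw [Function.iterate_succ_apply']
    exact (norm_ratioMap_le (ih.trans hr)).trans ih

theorem tendsto_ratioMap_iterate (hr : ‖r‖ < 1) :
    Tendsto (fun n => ratioMap^[n] r) atTop (nhds 0) := by
  have hc0 : 0 ≤ (2 + ‖r‖ ^ 6) / 3 := by positivity
  have hc1 : (2 + ‖r‖ ^ 6) / 3 < 1 := by
    have := pow_lt_one₀ (norm_nonneg r) hr (by norm_num : 6 ≠ 0); linarith
  have hgeo (n : ℕ) : ‖ratioMap^[n] r‖ ^ 2 ≤ ((2 + ‖r‖ ^ 6) / 3) ^ n * ‖r‖ ^ 2 := by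
    refine le_geom (u := fun n => ‖ratioMap^[n] r‖ ^ 2) hc0 n fun k _ => ?_
    have hk := norm_ratioMap_iterate_le hr.le k
    rw [Function.iterate_succ_apply']
    exact (norm_ratioMap_sq_le (hk.trans hr.le)).trans (by gcongr)
  have hsq : Tendsto (fun n => ‖ratioMap^[n] r‖ ^ 2) atTop (nhds 0) :=
    squeeze_zero (fun _ => by positivity) hgeo
      (by simpa using (tendsto_pow_atTop_nhds_zero_of_lt_one hc0 hc1).mul_const (‖r‖ ^ 2))
  rw [tendsto_zero_iff_norm_tendsto_zero]
  simpa [Real.sqrt_sq (norm_nonneg _)] using hsq.sqrt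

end Dynamics

section Orbit

variable {ω P r : ℂ}

theorem weierstrassCubic_iterate_smul_fourierVec (hω : ω ^ 2 + ω + 1 = 0) (hP : P ≠ 0)
    (hr : ‖r‖ < 1) (n : ℕ) :
    ∃ Q : ℂ, Q ≠ 0 ∧
      weierstrassCubic^[n] (P • fourierVec ω r) = Q • fourierVec ω (ratioMap^[n] r) := by
  induction n with
  | zero => exact ⟨P, hP, rfl⟩
  | succ n ih =>
    obtain ⟨Q, hQ, hn⟩ := ih
    have hrn := (norm_ratioMap_iterate_le hr.le n).trans_lt hr
    have h1 := pow_three_ne_of_norm_lt_one hrn (c := 1) (by norm_num)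
    have h2 := pow_three_ne_of_norm_lt_one hrn (c := 2) (by norm_num)
    refine ⟨Q * scaleFactor _, mul_ne_zero hQ (scaleFactor_ne_zero h1 h2), ?_⟩
    rw [Function.iterate_succ_apply', Function.iterate_succ_apply', hn, weierstrassCubic_smul,
      weierstrassCubic_fourierVec hω h1 h2, smul_smul]

theorem norm_weierstrassCubic_smul_div (hω : ω ^ 2 + ω + 1 = 0) (hP : P ≠ 0) (hr : ‖r‖ < 1) :
    ‖weierstrassCubic (P • fourierVec ω r)‖ / ‖P • fourierVec ω r‖ =
      ‖scaleFactor r‖ * ‖fourierVec ω (ratioMap r)‖ / ‖fourierVec ω r‖ := by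
  rw [weierstrassCubic_smul, weierstrassCubic_fourierVec hω (pow_three_ne_of_norm_lt_one hr
    (by norm_num)) (pow_three_ne_of_norm_lt_one hr (by norm_num)), smul_smul, norm_smul,
    norm_smul, norm_mul, mul_assoc, mul_div_mul_left _ _ (norm_ne_zero_iff.mpr hP)]

theorem tendsto_norm_ratio_of_tendsto_zero {s : ℕ → ℂ} (hs : Tendsto s atTop (nhds 0)) :
    Tendsto (fun n => ‖scaleFactor (s n)‖ * ‖fourierVec ω (ratioMap (s n))‖ /
      ‖fourierVec ω (s n)‖) atTop (nhds (2 / 3)) := by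
  have hv : Continuous (fourierVec ω) := continuous_pi fun k => by unfold fourierVec; fun_prop
  have hv0 : ‖fourierVec ω 0‖ ≠ 0 :=
    norm_ne_zero_iff.mpr fun h => by simpa [fourierVec] using congrFun h 0
  have hσ : ContinuousAt scaleFactor 0 :=
    ContinuousAt.div (by fun_prop) (by fun_prop) (by norm_num)
  have hφ : ContinuousAt ratioMap 0 :=
    ContinuousAt.div (by fun_prop) (by fun_prop) (by norm_num)
  have hF : ContinuousAt (fun x => ‖scaleFactor x‖ * ‖fourierVec ω (ratioMap x)‖ /
      ‖fourierVec ω x‖) 0 :=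
    (hσ.norm.mul (hv.continuousAt.comp hφ).norm).div hv.continuousAt.norm hv0
  have hF0 : ‖scaleFactor 0‖ * ‖fourierVec ω (ratioMap 0)‖ / ‖fourierVec ω 0‖ = 2 / 3 := by
    rw [ratioMap, mul_div_assoc]; norm_num [scaleFactor, hv0]
  simpa only [Function.comp_def, hF0] using hF.tendsto.comp hs

end Orbit

/-- Convergence of the Weierstrass method for `Z³`: if `z` lies in the hyperplane
`z₁+z₂+z₃ = 0` and is not a scalar multiple of a vector with real entries, then
the orbit under `W_{Z³}` is defined for all iterates, converges to the zero
vector, and the convergence is linear with rate `2/3`. -/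
theorem weierstrass_cubic_convergence
    (W : (Fin 3 → ℂ) → Fin 3 → ℂ)
    (hW : ∀ (w : Fin 3 → ℂ) (k : Fin 3),
      W w k = w k - (w k) ^ 3 / ∏ j ∈ univ.erase k, (w k - w j))
    (z : Fin 3 → ℂ) (hplane : z 0 + z 1 + z 2 = 0)
    (hreal : ¬ ∃ (l : ℂ) (w : Fin 3 → ℝ), z = fun k => l * (w k : ℂ)) :
    (∀ n : ℕ, Function.Injective (W^[n] z)) ∧
    Tendsto (fun n : ℕ => W^[n] z) atTop (nhds 0) ∧
    Tendsto (fun n : ℕ => ‖W^[n + 1] z‖ / ‖W^[n] z‖) atTop (nhds (2 / 3)) := by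
  obtain rfl : W = weierstrassCubic := funext fun w => funext (hW w)
  obtain ⟨ω, P, r, hω, hP, hr, hz⟩ := exists_eq_smul_fourierVec hplane hreal
  have horbit (n : ℕ) : ∃ Q : ℂ, Q ≠ 0 ∧
      weierstrassCubic^[n] z = Q • fourierVec ω (ratioMap^[n] r) :=
    hz ▸ weierstrassCubic_iterate_smul_fourierVec hω hP hr n
  have hlt (n : ℕ) : ‖ratioMap^[n] r‖ < 1 := (norm_ratioMap_iterate_le hr.le n).trans_lt hr
  have hinj (n : ℕ) : Function.Injective (weierstrassCubic^[n] z) := by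
    obtain ⟨Q, hQ, hn⟩ := horbit n
    rw [hn]
    exact (mul_right_injective₀ hQ).comp
      (fourierVec_injective hω (pow_three_ne_of_norm_lt_one (hlt n) (by norm_num)))
  have hratio : Tendsto (fun n => ‖weierstrassCubic^[n + 1] z‖ / ‖weierstrassCubic^[n] z‖)
      atTop (nhds (2 / 3)) := by
    refine (tendsto_norm_ratio_of_tendsto_zero (ω := ω) (tendsto_ratioMap_iterate hr)).congr
      fun n => ?_
    obtain ⟨Q, hQ, hn⟩ := horbit n
    rw [Function.iterate_succ_apply', hn, norm_weierstrassCubic_smul_div hω hQ (hlt n)]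
  have hne (n : ℕ) : weierstrassCubic^[n] z ≠ 0 := fun h =>
    (by decide : (0 : Fin 3) ≠ 1) (hinj n (by rw [h]; rfl))
  exact ⟨hinj, (summable_of_ratio_test_tendsto_lt_one (by norm_num) (Eventually.of_forall hne)
    hratio).tendsto_atTop_zero, hratio⟩
end

section
/- Lifting attracting cycles to higher degree (dynamical part): let p be monic of degree d and q ∈ ℂ^d a periodic point of W_p of period n such that all eigenvalues of the Jacobian of W_p^{∘n} at q have absolute value < 1. Then for all α ∈ ℂ of sufficiently large absolute value, q̃ = (q, α) ∈ ℂ^{d+1} is a periodic point of period n for W_{p̃} with p̃(Z) = (Z−α)p(Z), and all eigenvalues of the Jacobian of W_{p̃}^{∘n} at q̃ have absolute value < 1. -/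
/-!
Since `α` is a root of `(Z - α) p`, the Weierstrass step of `(Z - α) p` keeps the last
coordinate `α` and acts as `W_p` on the others, as long as no entry equals `α`. Hence `(q, α)` is
`n`-periodic and the Jacobian of the `n`-th iterate at `(q, α)` is block upper triangular, with the
Jacobian of `W_p^{∘n}` at `q` as leading block and `λ₀ ⋯ λ_{n-1}` in the corner, where
`λ_m = 1 - p(α) / ∏ⱼ (α - (W_p^{∘m} q)ⱼ)`. As `p` and `∏ⱼ (Z - zⱼ)` are both monic of degree `d`,
each `λ_m` tends to `0` as `|α| → ∞`.
-/

open Polynomial Finset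

/-- The Weierstrass iteration map of a polynomial `p` in dimension `m`. -/
noncomputable def wmap {m : ℕ} (p : Polynomial ℂ) (z : Fin m → ℂ) : Fin m → ℂ :=
  fun k => z k - p.eval (z k) / ∏ j ∈ Finset.univ.erase k, (z k - z j)

/-- The Jacobian matrix (of partial complex derivatives) of a map
`F : ℂ^m → ℂ^m` at the point `z`. -/
noncomputable def jacobianMatrix {m : ℕ} (F : (Fin m → ℂ) → Fin m → ℂ)
    (z : Fin m → ℂ) : Matrix (Fin m) (Fin m) ℂ :=
  Matrix.of fun i j => deriv (fun w => F (Function.update z j w) i) (z j)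

open Filter Topology Bornology

theorem Fin.prod_univ_erase_last {M : Type*} [CommMonoid M] {d : ℕ} (f : Fin (d + 1) → M) :
    ∏ j ∈ univ.erase (Fin.last d), f j = ∏ j : Fin d, f j.castSucc := by
  rw [Fin.univ_castSuccEmb, erase_cons, prod_map]
  rfl

theorem Fin.prod_univ_erase_castSucc {M : Type*} [CommMonoid M] {d : ℕ} (f : Fin (d + 1) → M)
    (i : Fin d) :
    ∏ j ∈ univ.erase i.castSucc, f j = f (Fin.last d) * ∏ j ∈ univ.erase i, f j.castSucc := by
  rw [Fin.univ_castSuccEmb, cons_eq_insert, erase_insert_of_ne (Fin.castSucc_lt_last i).ne',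
    prod_insert (by simp [Fin.castSucc_ne_last]), ← Fin.coe_castSuccEmb, ← map_erase, prod_map]

theorem differentiableAt_iterate_of_orbit {𝕜 E : Type*} [NontriviallyNormedField 𝕜]
    [NormedAddCommGroup E] [NormedSpace 𝕜 E] {f : E → E} {x : E} {n : ℕ}
    (h : ∀ k < n, DifferentiableAt 𝕜 f (f^[k] x)) : DifferentiableAt 𝕜 f^[n] x := by
  induction n with
  | zero => exact differentiableAt_id
  | succ n ih =>
    rw [Function.iterate_succ']
    exact (h n n.lt_succ_self).comp x (ih fun k hk => h k (hk.trans n.lt_succ_self))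

section Jacobian

variable {m : ℕ}

theorem jacobianMatrix_eq_toMatrix' {F : (Fin m → ℂ) → Fin m → ℂ} {z : Fin m → ℂ}
    (hF : DifferentiableAt ℂ F z) :
    jacobianMatrix F z = LinearMap.toMatrix' (fderiv ℂ F z : (Fin m → ℂ) →ₗ[ℂ] Fin m → ℂ) := by
  ext i j
  rw [LinearMap.toMatrix'_apply]
  have hline : HasDerivAt (fun w => F (Function.update z j w)) (fderiv ℂ F z (Pi.single j 1))
      (z j) := by
    refine HasFDerivAt.comp_hasDerivAt (z j) ?_ (hasDerivAt_update z j (z j))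
    rw [Function.update_eq_self]
    exact hF.hasFDerivAt
  exact ((hasFDerivAt_apply i _).comp_hasDerivAt (z j) hline).deriv

theorem jacobianMatrix_id (z : Fin m → ℂ) : jacobianMatrix id z = 1 := by
  rw [jacobianMatrix_eq_toMatrix' differentiableAt_id, fderiv_id]
  exact LinearMap.toMatrix'_id

theorem jacobianMatrix_comp {G F : (Fin m → ℂ) → Fin m → ℂ} {z : Fin m → ℂ}
    (hG : DifferentiableAt ℂ G (F z)) (hF : DifferentiableAt ℂ F z) :
    jacobianMatrix (G ∘ F) z = jacobianMatrix G (F z) * jacobianMatrix F z := by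
  rw [jacobianMatrix_eq_toMatrix' (hG.comp z hF), jacobianMatrix_eq_toMatrix' hG,
    jacobianMatrix_eq_toMatrix' hF, fderiv_comp z hG hF, ← LinearMap.toMatrix'_comp]
  rfl

theorem jacobianMatrix_iterate_succ {n : ℕ} {F : (Fin m → ℂ) → Fin m → ℂ} {z : Fin m → ℂ}
    (h : ∀ k ≤ n, DifferentiableAt ℂ F (F^[k] z)) :
    jacobianMatrix F^[n + 1] z = jacobianMatrix F (F^[n] z) * jacobianMatrix F^[n] z := by
  rw [Function.iterate_succ']
  exact jacobianMatrix_comp (h n le_rfl)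
    (differentiableAt_iterate_of_orbit fun k hk => h k hk.le)

theorem differentiableAt_wmap (p : ℂ[X]) {z : Fin m → ℂ} (hz : Function.Injective z) :
    DifferentiableAt ℂ (wmap p) z := by
  rw [differentiableAt_pi]
  intro k
  have hne : ∏ j ∈ univ.erase k, (z k - z j) ≠ 0 :=
    prod_ne_zero_iff.2 fun j hj => sub_ne_zero.2 fun h => ne_of_mem_erase hj (hz h).symm
  unfold wmap
  fun_prop (disch := exact hne)

end Jacobian

/-- `A = [[B, *], [0, c]]` with respect to `Fin (d + 1) = Fin d ⊕ {last}`. -/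
structure Matrix.IsSnocBlockTriangular {K : Type*} [Field K] {d : ℕ}
    (A : Matrix (Fin (d + 1)) (Fin (d + 1)) K) (B : Matrix (Fin d) (Fin d) K) (c : K) : Prop where
  castSucc_castSucc : ∀ i j : Fin d, A i.castSucc j.castSucc = B i j
  last_castSucc : ∀ j : Fin d, A (Fin.last d) j.castSucc = 0
  last_last : A (Fin.last d) (Fin.last d) = c

namespace Matrix.IsSnocBlockTriangular

variable {K : Type*} [Field K] {d : ℕ} {A A' : Matrix (Fin (d + 1)) (Fin (d + 1)) K}
  {B B' : Matrix (Fin d) (Fin d) K} {c c' : K}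

theorem one : IsSnocBlockTriangular (1 : Matrix (Fin (d + 1)) (Fin (d + 1)) K) 1 1 where
  castSucc_castSucc i j := by simp [Matrix.one_apply]
  last_castSucc j := Matrix.one_apply_ne (Fin.castSucc_ne_last j).symm
  last_last := Matrix.one_apply_eq _

theorem mul (h : IsSnocBlockTriangular A B c) (h' : IsSnocBlockTriangular A' B' c') :
    IsSnocBlockTriangular (A * A') (B * B') (c * c') where
  castSucc_castSucc i j := by
    simp [Matrix.mul_apply, Fin.sum_univ_castSucc, h.castSucc_castSucc, h'.castSucc_castSucc,
      h'.last_castSucc]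
  last_castSucc j := by
    simp [Matrix.mul_apply, Fin.sum_univ_castSucc, h.last_castSucc, h'.last_castSucc]
  last_last := by
    simp [Matrix.mul_apply, Fin.sum_univ_castSucc, h.last_castSucc, h.last_last, h'.last_last]

theorem algebraMap_sub (h : IsSnocBlockTriangular A B c) (μ : K) :
    IsSnocBlockTriangular (algebraMap K _ μ - A) (algebraMap K _ μ - B) (μ - c) where
  castSucc_castSucc i j := by
    simp [Matrix.algebraMap_matrix_apply, h.castSucc_castSucc]
  last_castSucc j := by
    simp [Matrix.algebraMap_matrix_apply, h.last_castSucc, (Fin.castSucc_ne_last j).symm]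
  last_last := by simp [Matrix.algebraMap_matrix_apply, h.last_last]

theorem det_eq (h : IsSnocBlockTriangular A B c) : A.det = c * B.det := by
  rw [Matrix.det_succ_row A (Fin.last d), Fin.sum_univ_castSucc]
  have hB : A.submatrix Fin.castSucc Fin.castSucc = B := Matrix.ext h.castSucc_castSucc
  simp [h.last_castSucc, h.last_last, Fin.succAbove_last, hB, ← two_mul]

theorem mem_spectrum (h : IsSnocBlockTriangular A B c) {μ : K} (hμ : μ ∈ spectrum K A) :
    μ ∈ spectrum K B ∨ μ = c := by
  by_contra! hne
  refine spectrum.mem_iff.1 hμ ?_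
  rw [Matrix.isUnit_iff_isUnit_det, (h.algebraMap_sub μ).det_eq]
  exact (isUnit_iff_ne_zero.2 (sub_ne_zero.2 hne.2)).mul
    ((Matrix.isUnit_iff_isUnit_det _).1 (spectrum.notMem_iff.1 hne.1))

end Matrix.IsSnocBlockTriangular

/-- The paper's `λ_m` for `z = W_p^{∘m}(q)`. -/
noncomputable def liftMultiplier {d : ℕ} (p : ℂ[X]) (z : Fin d → ℂ) (α : ℂ) : ℂ :=
  1 - p.eval α / ∏ j, (α - z j)

section Lift

variable {d : ℕ} (p : ℂ[X]) (α : ℂ)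

theorem wmap_X_sub_C_mul_last {v : Fin (d + 1) → ℂ} (hv : v (Fin.last d) = α) :
    wmap ((X - C α) * p) v (Fin.last d) = α := by
  simp [wmap, hv]

theorem wmap_X_sub_C_mul_snoc_castSucc {u : Fin d → ℂ} {i : Fin d} (hu : u i ≠ α) :
    wmap ((X - C α) * p) (Fin.snoc u α) i.castSucc = wmap p u i := by
  simp only [wmap, Fin.snoc_castSucc, eval_mul, eval_sub, eval_X, eval_C,
    Fin.prod_univ_erase_castSucc, Fin.snoc_last]
  rw [mul_div_mul_left _ _ (sub_ne_zero.2 hu)]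

theorem wmap_X_sub_C_mul_snoc {u : Fin d → ℂ} (hu : ∀ i, u i ≠ α) :
    wmap ((X - C α) * p) (Fin.snoc u α) = Fin.snoc (wmap p u) α := by
  funext k
  induction k using Fin.lastCases with
  | last => rw [wmap_X_sub_C_mul_last p α (Fin.snoc_last _ _), Fin.snoc_last]
  | cast i => rw [wmap_X_sub_C_mul_snoc_castSucc p α (hu i), Fin.snoc_castSucc]

theorem iterate_wmap_X_sub_C_mul_snoc {q : Fin d → ℂ} {n : ℕ}
    (hq : ∀ k < n, ∀ i, (wmap p)^[k] q i ≠ α) :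
    (wmap ((X - C α) * p))^[n] (Fin.snoc q α) = Fin.snoc ((wmap p)^[n] q) α := by
  induction n with
  | zero => rfl
  | succ n ih =>
    rw [Function.iterate_succ_apply', ih fun k hk => hq k (hk.trans n.lt_succ_self),
      wmap_X_sub_C_mul_snoc p α (hq n n.lt_succ_self), Function.iterate_succ_apply']

variable {z : Fin d → ℂ}

theorem jacobianMatrix_wmap_X_sub_C_mul_castSucc (hz : ∀ j, z j ≠ α) (i j : Fin d) :
    jacobianMatrix (wmap ((X - C α) * p)) (Fin.snoc z α) i.castSucc j.castSucc
      = jacobianMatrix (wmap p) z i j := by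
  have hfar : ∀ᶠ w in 𝓝 (z j), Function.update z j w i ≠ α :=
    (by fun_prop : Continuous fun w => Function.update z j w i).continuousAt.eventually_ne
      (by simpa using hz i)
  have heq : (fun w => wmap ((X - C α) * p)
        (Function.update (Fin.snoc z α) j.castSucc w) i.castSucc)
      =ᶠ[𝓝 (z j)] fun w => wmap p (Function.update z j w) i := by
    filter_upwards [hfar] with w hw
    rw [← Fin.snoc_update, wmap_X_sub_C_mul_snoc_castSucc p α hw]
  simp only [jacobianMatrix, Matrix.of_apply, Fin.snoc_castSucc]
  exact heq.deriv_eq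

theorem jacobianMatrix_wmap_X_sub_C_mul_last_castSucc (j : Fin d) :
    jacobianMatrix (wmap ((X - C α) * p)) (Fin.snoc z α) (Fin.last d) j.castSucc = 0 := by
  have hconst : (fun w => wmap ((X - C α) * p)
      (Function.update (Fin.snoc z α) j.castSucc w) (Fin.last d)) = fun _ => α := by
    funext w
    exact wmap_X_sub_C_mul_last p α (by rw [← Fin.snoc_update, Fin.snoc_last])
  simp only [jacobianMatrix, Matrix.of_apply, hconst, deriv_const']

theorem jacobianMatrix_wmap_X_sub_C_mul_last_last (hz : ∀ j, z j ≠ α) :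
    jacobianMatrix (wmap ((X - C α) * p)) (Fin.snoc z α) (Fin.last d) (Fin.last d)
      = liftMultiplier p z α := by
  have hfun : (fun w => wmap ((X - C α) * p)
        (Function.update (Fin.snoc z α) (Fin.last d) w) (Fin.last d))
      = fun w => w - (w - α) * (p.eval w / ∏ j, (w - z j)) := by
    funext w
    simp [wmap, Fin.update_snoc_last, Fin.prod_univ_erase_last, mul_div_assoc]
  -- `w ↦ (w - α) g(w)` has derivative `g(α)` at its zero `α`
  have hD : ∏ j, (α - z j) ≠ 0 := prod_ne_zero_iff.2 fun j _ => sub_ne_zero.2 (hz j).symm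
  have hg : DifferentiableAt ℂ (fun w => p.eval w / ∏ j, (w - z j)) α := by
    fun_prop (disch := exact hD)
  have hderiv := (hasDerivAt_id α).sub (((hasDerivAt_id α).sub_const α).mul hg.hasDerivAt)
  simp only [id, sub_self, zero_mul, one_mul, add_zero] at hderiv
  simp only [jacobianMatrix, Matrix.of_apply, hfun, Fin.snoc_last]
  exact hderiv.deriv

theorem isSnocBlockTriangular_jacobianMatrix_wmap_X_sub_C_mul (hz : ∀ j, z j ≠ α) :
    (jacobianMatrix (wmap ((X - C α) * p)) (Fin.snoc z α)).IsSnocBlockTriangular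
      (jacobianMatrix (wmap p) z) (liftMultiplier p z α) where
  castSucc_castSucc := jacobianMatrix_wmap_X_sub_C_mul_castSucc p α hz
  last_castSucc := jacobianMatrix_wmap_X_sub_C_mul_last_castSucc p α
  last_last := jacobianMatrix_wmap_X_sub_C_mul_last_last p α hz

theorem isSnocBlockTriangular_jacobianMatrix_iterate_wmap_X_sub_C_mul {q : Fin d → ℂ} {n : ℕ}
    (hinj : ∀ k < n, Function.Injective ((wmap p)^[k] q))
    (hq : ∀ k < n, ∀ i, (wmap p)^[k] q i ≠ α) :
    (jacobianMatrix (wmap ((X - C α) * p))^[n] (Fin.snoc q α)).IsSnocBlockTriangular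
      (jacobianMatrix (wmap p)^[n] q) (∏ k ∈ range n, liftMultiplier p ((wmap p)^[k] q) α) := by
  induction n with
  | zero => simpa only [Function.iterate_zero, jacobianMatrix_id, prod_range_zero] using
      Matrix.IsSnocBlockTriangular.one
  | succ n ih =>
    have hdiff : ∀ k ≤ n, DifferentiableAt ℂ (wmap p) ((wmap p)^[k] q) := fun k hk =>
      differentiableAt_wmap p (hinj k (by omega))
    have hdiff' : ∀ k ≤ n, DifferentiableAt ℂ (wmap ((X - C α) * p))
        ((wmap ((X - C α) * p))^[k] (Fin.snoc q α)) := fun k hk => by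
      rw [iterate_wmap_X_sub_C_mul_snoc p α fun l hl => hq l (by omega)]
      exact differentiableAt_wmap _ (Fin.snoc_injective_of_injective (hinj k (by omega))
        fun ⟨i, hi⟩ => hq k (by omega) i hi)
    rw [jacobianMatrix_iterate_succ hdiff', jacobianMatrix_iterate_succ hdiff,
      iterate_wmap_X_sub_C_mul_snoc p α fun k hk => hq k (by omega),
      prod_range_succ, mul_comm (∏ k ∈ range n, _)]
    exact (isSnocBlockTriangular_jacobianMatrix_wmap_X_sub_C_mul p α (hq n (by omega))).mul
      (ih (fun k hk => hinj k (by omega)) fun k hk => hq k (by omega))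

end Lift

theorem tendsto_liftMultiplier_cobounded {d : ℕ} {p : ℂ[X]} (hp : p.Monic)
    (hdeg : p.natDegree = d) (z : Fin d → ℂ) :
    Tendsto (liftMultiplier p z) (cobounded ℂ) (𝓝 0) := by
  set D : ℂ[X] := ∏ j, (X - C (z j))
  have hDmonic : D.Monic := monic_prod_of_monic _ _ fun j _ => monic_X_sub_C (z j)
  have hDdeg : D.natDegree = d := by
    simp [D, natDegree_prod_of_monic _ _ fun j _ => monic_X_sub_C (z j)]
  have hlt : (D - p).degree < D.degree := by
    refine degree_sub_lt_left ?_ hDmonic.ne_zero (by rw [hDmonic.leadingCoeff, hp.leadingCoeff])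
    rw [degree_eq_natDegree hDmonic.ne_zero, degree_eq_natDegree hp.ne_zero, hDdeg, hdeg]
  have hfar : ∀ᶠ α in cobounded ℂ, D.eval α ≠ 0 := by
    filter_upwards [eventually_all.2 fun j => eventually_ne_cobounded (z j)] with α hα
    simpa [D, eval_prod, prod_ne_zero_iff, sub_eq_zero] using hα
  refine (isLittleO_cobounded_of_degree_lt hlt).tendsto_div_nhds_zero.congr' ?_
  filter_upwards [hfar] with α hα
  rw [eval_sub, sub_div, div_self hα, liftMultiplier]
  simp [D, eval_prod]

/-- Lifting attracting cycles to higher degree (dynamical part): if `q` is an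
`n`-periodic point of `W_p` whose multiplier matrix has all eigenvalues of
absolute value `< 1`, and all iterates of `q` have pairwise distinct entries,
then for all `α` of sufficiently large absolute value, `(q, α)` is an
`n`-periodic point of `W_{(Z−α)p}` whose multiplier matrix has all eigenvalues
of absolute value `< 1`. -/
theorem weierstrass_lift_attracting_cycle
    (d n : ℕ) (hn : 1 ≤ n) (p : Polynomial ℂ) (hmonic : p.Monic)
    (hdeg : p.natDegree = d) (q : Fin d → ℂ)
    (hper : (wmap p)^[n] q = q)
    (horbit : ∀ m : ℕ, Function.Injective ((wmap p)^[m] q))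
    (heig : ∀ μ ∈ spectrum ℂ (jacobianMatrix ((wmap p)^[n]) q), ‖μ‖ < 1) :
    ∃ R : ℝ, ∀ α : ℂ, R < ‖α‖ →
      (wmap ((X - C α) * p))^[n] (Fin.snoc q α) = Fin.snoc q α ∧
      ∀ μ ∈ spectrum ℂ
          (jacobianMatrix ((wmap ((X - C α) * p))^[n]) (Fin.snoc q α)),
        ‖μ‖ < 1 := by
  have hprod : Tendsto (fun α => ∏ k ∈ range n, liftMultiplier p ((wmap p)^[k] q) α)
      (cobounded ℂ) (𝓝 0) := by
    simpa [zero_pow (Nat.one_le_iff_ne_zero.1 hn)] using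
      tendsto_finsetProd (range n) fun k _ => tendsto_liftMultiplier_cobounded hmonic hdeg _
  have hfar : ∀ᶠ α in cobounded ℂ, (∀ k < n, ∀ i, (wmap p)^[k] q i ≠ α) ∧
      ∏ k ∈ range n, liftMultiplier p ((wmap p)^[k] q) α ∈ Metric.ball 0 1 := by
    refine Eventually.and ?_ (hprod.eventually (Metric.ball_mem_nhds 0 one_pos))
    filter_upwards [(eventually_all_finset (range n)).2 fun k _ =>
      eventually_all.2 fun i => eventually_ne_cobounded ((wmap p)^[k] q i)] with α hα k hk i
    exact (hα k (mem_range.2 hk) i).symm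
  obtain ⟨R, -, hR⟩ := hasBasis_cobounded_norm.eventually_iff.1 hfar
  refine ⟨R, fun α hα => ?_⟩
  obtain ⟨hq, hsmall⟩ := hR hα.le
  have hblock := isSnocBlockTriangular_jacobianMatrix_iterate_wmap_X_sub_C_mul p α
    (fun k _ => horbit k) hq
  refine ⟨by rw [iterate_wmap_X_sub_C_mul_snoc p α hq, hper], fun μ hμ => ?_⟩
  rcases hblock.mem_spectrum hμ with hμ | rfl
  exacts [heig μ hμ, mem_ball_zero_iff.1 hsmall]
end

section
/- For the cubic family p(Z) = Z³ + aZ + b with Weierstrass map restricted to the plane z₁ + z₂ + z₃ = 0 and extended to ℙ² via coordinates (z₁ : z₂ : z₀) (where z₃ = −z₁ − z₂ and z₀ is the homogenizing coordinate), the line at infinity {z₀ = 0} is forward invariant, and the induced map on this line (identified with ℙ¹ via z = z₂/z₁) is the rational map φ(z) = z(2+z)(1+z−z²)/((1+2z)(1−z−z²)), independent of a and b. -/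
/-- For the extension of the Weierstrass map of `p(Z) = Z³ + aZ + b` (restricted
to `z₁+z₂+z₃ = 0`) to `ℙ²` via `(z₁ : z₂ : z₀)`, the line at infinity
`{z₀ = 0}` is forward invariant, and the induced map on it, in the coordinate
`z = z₂/z₁`, is `φ(z) = z(2+z)(1+z−z²)/((1+2z)(1−z−z²))`, independent of
`a` and `b`. -/
theorem weierstrass_line_at_infinity_invariant
    (F : ℂ → ℂ → (ℂ × ℂ × ℂ) → ℂ × ℂ × ℂ)
    (hF : ∀ (a b z₁ z₂ z₀ : ℂ),
      F a b (z₁, z₂, z₀) =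
        ((z₁ + 2 * z₂) * (z₁ ^ 3 + a * z₁ * z₀ ^ 2 + b * z₀ ^ 3 - z₁ * z₂ * (z₁ + z₂)),
         (2 * z₁ + z₂) * (-z₂ ^ 3 - a * z₂ * z₀ ^ 2 - b * z₀ ^ 3 + z₁ * z₂ * (z₁ + z₂)),
         z₀ * (z₁ - z₂) * (z₁ + 2 * z₂) * (2 * z₁ + z₂))) :
    (∀ a b z₁ z₂ : ℂ, (F a b (z₁, z₂, 0)).2.2 = 0) ∧
    (∀ a b z : ℂ, (1 + 2 * z) * (1 - z - z ^ 2) ≠ 0 →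
      F a b (1, z, 0) =
        ((1 + 2 * z) * (1 - z - z ^ 2),
         (1 + 2 * z) * (1 - z - z ^ 2) *
           (z * (2 + z) * (1 + z - z ^ 2) / ((1 + 2 * z) * (1 - z - z ^ 2))),
         0)) := by
  constructor
  · intro a b z₁ z₂
    rw [hF]; ring
  · intro a b z hz
    rw [hF, mul_div_cancel₀ _ hz]
    simp only [Prod.mk.injEq]; refine ⟨?_, ?_, ?_⟩ <;> ring
end
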